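/- For every $i \geq 0$, the ideal $J_i = \operatorname{ann}_S H^i(G, R)$ is a $\mathcal{P}^*$-invariant ideal of $S$, i.e., $\mathcal{P}^m(J_i) \subseteq J_i$ for all $m \geq 0$. -/

import Mathlib

set_option linter.unusedSectionVars false

open MvPolynomial

noncomputable section

variable (𝔽 : Type) [Field 𝔽] [Fintype 𝔽] [DecidableEq 𝔽] (d : ℕ)

/-- The polynomial ring `R = 𝔽_q[V] = Sym(V^*)`, realized as a polynomial ring in `d`
variables (the variables `X i` forming a basis of `V^*`). -/
abbrev PolyR := MvPolynomial (Fin d) 𝔽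

/-- The linear form in `V^* ⊆ R` with coefficient vector `c`. -/
def linForm (c : Fin d → 𝔽) : PolyR 𝔽 d := ∑ i, MvPolynomial.C (c i) * X i

/-- The action of `g ∈ GL(V)` on `R = Sym(V^*)`, induced by the (contragredient) action
of `GL(V)` on linear forms: the linear form with coefficient vector `c` is sent to the
linear form with coefficient vector `c ⬝ g⁻¹`. -/
def glAct (g : GL (Fin d) 𝔽) : PolyR 𝔽 d →ₐ[𝔽] PolyR 𝔽 d :=
  aeval fun i => linForm 𝔽 d fun j => ((g⁻¹ : GL (Fin d) 𝔽) : Matrix (Fin d) (Fin d) 𝔽) i j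

lemma glAct_one : glAct 𝔽 d 1 = AlgHom.id 𝔽 (PolyR 𝔽 d) := by
  apply MvPolynomial.algHom_ext
  intro i
  simp [glAct, linForm, Matrix.one_apply, apply_ite MvPolynomial.C, ite_mul,
    Finset.sum_ite_eq]

lemma glAct_mul (g h : GL (Fin d) 𝔽) :
    glAct 𝔽 d (g * h) = (glAct 𝔽 d g).comp (glAct 𝔽 d h) := by
  apply MvPolynomial.algHom_ext
  intro i
  simp only [glAct, aeval_X, AlgHom.comp_apply, linForm, map_sum, map_mul, aeval_C, aeval_X,
    mul_inv_rev, Units.val_mul, Matrix.mul_apply, algebraMap_eq, Finset.mul_sum, C_mul,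
    Finset.sum_mul]
  rw [Finset.sum_comm]
  simp [mul_assoc]

variable (G : Subgroup (GL (Fin d) 𝔽))

/-- The invariant ring `S = R^G`. -/
def invS : Subalgebra 𝔽 (PolyR 𝔽 d) :=
  ⨅ g ∈ G, AlgHom.equalizer (glAct 𝔽 d g) (AlgHom.id 𝔽 (PolyR 𝔽 d))

lemma mem_invS (r : PolyR 𝔽 d) : r ∈ invS 𝔽 d G ↔ ∀ g ∈ G, glAct 𝔽 d g r = r := by
  simp [invS, Algebra.mem_iInf, AlgHom.mem_equalizer]

/-- `R` as a representation of `G` over `S = R^G` (the `G`-action on `R` is `S`-linear). -/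
def invRep : Representation (invS 𝔽 d G) G (PolyR 𝔽 d) where
  toFun g :=
    { toFun := glAct 𝔽 d g
      map_add' := by simp
      map_smul' := by
        intro s r
        have hs : glAct 𝔽 d (g : GL (Fin d) 𝔽) (s : PolyR 𝔽 d) = (s : PolyR 𝔽 d) :=
          (mem_invS 𝔽 d G _).mp s.2 g g.2
        simp only [Algebra.smul_def, map_mul, RingHom.id_apply]
        rw [show (algebraMap (invS 𝔽 d G) (PolyR 𝔽 d)) s = (s : PolyR 𝔽 d) from rfl, hs] }
  map_one' := LinearMap.ext fun r => by
    show glAct 𝔽 d ((1 : G) : GL (Fin d) 𝔽) r = r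
    rw [OneMemClass.coe_one, glAct_one]
    rfl
  map_mul' := fun g h => LinearMap.ext fun r => by
    show glAct 𝔽 d ((g * h : G) : GL (Fin d) 𝔽) r = glAct 𝔽 d g (glAct 𝔽 d h r)
    rw [MulMemClass.coe_mul, glAct_mul]
    rfl

/-- The `i`-th group cohomology `H^i(G, R)`, as a module over `S = R^G`. -/
def cohGR (i : ℕ) : ModuleCat (invS 𝔽 d G) := groupCohomology (Rep.of (invRep 𝔽 d G)) i

/-- `J_i`, the annihilator of `H^i(G, R)` in `S`. -/
def annJ (i : ℕ) : Ideal (invS 𝔽 d G) := Module.annihilator (invS 𝔽 d G) (cohGR 𝔽 d G i)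

/-- The top Dickson class `𝐝_{d,0} = ∏_{0 ≠ v ∈ V^*} v ∈ R`. -/
def dickson : PolyR 𝔽 d := ∏ c ∈ Finset.univ.filter (fun c : Fin d → 𝔽 => c ≠ 0), linForm 𝔽 d c


lemma glAct_linForm (g : GL (Fin d) 𝔽) (c : Fin d → 𝔽) :
    glAct 𝔽 d g (linForm 𝔽 d c) =
      linForm 𝔽 d (Matrix.vecMul c ((g⁻¹ : GL (Fin d) 𝔽) : Matrix (Fin d) (Fin d) 𝔽)) := by
  simp only [glAct, linForm, map_sum, map_mul, aeval_C, aeval_X, algebraMap_eq,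
    Matrix.vecMul, dotProduct, map_sum, C_mul, Finset.mul_sum, Finset.sum_mul]
  rw [Finset.sum_comm]
  simp [mul_assoc]

lemma glAct_dickson (g : GL (Fin d) 𝔽) : glAct 𝔽 d g (dickson 𝔽 d) = dickson 𝔽 d := by
  unfold dickson
  rw [map_prod]
  simp only [glAct_linForm]
  refine Finset.prod_bij'
    (fun c _ => Matrix.vecMul c ((g⁻¹ : GL (Fin d) 𝔽) : Matrix (Fin d) (Fin d) 𝔽))
    (fun c _ => Matrix.vecMul c ((g : GL (Fin d) 𝔽) : Matrix (Fin d) (Fin d) 𝔽))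
    ?_ ?_ ?_ ?_ ?_
  · intro c hc
    simp only [Finset.mem_filter, Finset.mem_univ, true_and] at hc ⊢
    intro h0
    apply hc
    have h2 := congrArg
      (fun v => Matrix.vecMul v ((g : GL (Fin d) 𝔽) : Matrix (Fin d) (Fin d) 𝔽)) h0
    simp only [Matrix.vecMul_vecMul, Matrix.zero_vecMul, ← Units.val_mul, inv_mul_cancel,
      Units.val_one, Matrix.vecMul_one] at h2
    exact h2
  · intro c hc
    simp only [Finset.mem_filter, Finset.mem_univ, true_and] at hc ⊢
    intro h0
    apply hc
    have h2 := congrArg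
      (fun v => Matrix.vecMul v ((g⁻¹ : GL (Fin d) 𝔽) : Matrix (Fin d) (Fin d) 𝔽)) h0
    simp only [Matrix.vecMul_vecMul, Matrix.zero_vecMul, ← Units.val_mul, mul_inv_cancel,
      Units.val_one, Matrix.vecMul_one] at h2
    exact h2
  · intro c hc
    simp only [Matrix.vecMul_vecMul, ← Units.val_mul, inv_mul_cancel, Units.val_one,
      Matrix.vecMul_one]
  · intro c hc
    simp only [Matrix.vecMul_vecMul, ← Units.val_mul, mul_inv_cancel, Units.val_one,
      Matrix.vecMul_one]
  · intro c hc
    rfl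

/-- The top Dickson class as an element of the invariant ring `S = R^G`. -/
def dicksonS : invS 𝔽 d G :=
  ⟨dickson 𝔽 d, (mem_invS 𝔽 d G _).mpr fun g _ => glAct_dickson 𝔽 d g⟩

/-- The total Steenrod operation `P(ξ) : R → R[ξ]`, the `𝔽_q`-algebra homomorphism
determined by `P(ξ)(v) = v + v^q ξ` for linear forms `v` (here on the basis `X i`). -/
def steenrodTotal : PolyR 𝔽 d →ₐ[𝔽] Polynomial (PolyR 𝔽 d) :=
  aeval fun i =>
    Polynomial.C (X i) + Polynomial.C ((X i : PolyR 𝔽 d) ^ Fintype.card 𝔽) * Polynomial.X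

/-- The Steenrod reduced power operation `𝒫^m : R → R`, defined by
`P(ξ)(f) = ∑ᵢ 𝒫^i(f) ξ^i`. -/
def steenrodP (m : ℕ) (f : PolyR 𝔽 d) : PolyR 𝔽 d := (steenrodTotal 𝔽 d f).coeff m

lemma linForm_pow_card (c : Fin d → 𝔽) :
    (linForm 𝔽 d c) ^ Fintype.card 𝔽 =
      ∑ j, MvPolynomial.C (c j) * (X j : PolyR 𝔽 d) ^ Fintype.card 𝔽 := by
  obtain ⟨n, hp, hcard⟩ := FiniteField.card 𝔽 (ringChar 𝔽)
  haveI : Fact (ringChar 𝔽).Prime := ⟨hp⟩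
  haveI : ExpChar (PolyR 𝔽 d) (ringChar 𝔽) := .prime hp
  have h := map_sum (iterateFrobenius (PolyR 𝔽 d) (ringChar 𝔽) n)
    (fun i => MvPolynomial.C (c i) * X i) Finset.univ
  simp only [iterateFrobenius_def] at h
  rw [linForm, hcard, h]
  refine Finset.sum_congr rfl fun j _ => ?_
  rw [mul_pow, ← map_pow, ← hcard, FiniteField.pow_card]

lemma steenrodTotal_linForm (c : Fin d → 𝔽) :
    steenrodTotal 𝔽 d (linForm 𝔽 d c) =
      Polynomial.C (linForm 𝔽 d c) +
        Polynomial.C ((linForm 𝔽 d c) ^ Fintype.card 𝔽) * Polynomial.X := by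
  rw [linForm_pow_card]
  rw [linForm, map_sum]
  simp only [map_mul, steenrodTotal, aeval_C, aeval_X, MvPolynomial.algebraMap_eq,
    Polynomial.algebraMap_apply]
  simp only [mul_add, ← Polynomial.C_mul, Finset.sum_add_distrib, ← mul_assoc, ← Finset.sum_mul,
    ← map_sum]

/-- The total Steenrod operation commutes with the `GL(V)`-action (acting trivially on `ξ`,
i.e. coefficientwise on `R[ξ]`). -/
lemma map_glAct_steenrodTotal (g : GL (Fin d) 𝔽) (r : PolyR 𝔽 d) :
    Polynomial.map (glAct 𝔽 d g).toRingHom (steenrodTotal 𝔽 d r) =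
      steenrodTotal 𝔽 d (glAct 𝔽 d g r) := by
  have key : (Polynomial.mapAlgHom (glAct 𝔽 d g)).comp (steenrodTotal 𝔽 d) =
      (steenrodTotal 𝔽 d).comp (glAct 𝔽 d g) := by
    apply MvPolynomial.algHom_ext
    intro i
    simp only [AlgHom.comp_apply, steenrodTotal, aeval_X]
    rw [show (Polynomial.mapAlgHom (glAct 𝔽 d g))
          (Polynomial.C (X i) + Polynomial.C ((X i : PolyR 𝔽 d) ^ Fintype.card 𝔽) * Polynomial.X)
        = Polynomial.map (glAct 𝔽 d g).toRingHom
          (Polynomial.C (X i) + Polynomial.C ((X i : PolyR 𝔽 d) ^ Fintype.card 𝔽) * Polynomial.X)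
        from rfl]
    simp only [Polynomial.map_add, Polynomial.map_mul, Polynomial.map_C, Polynomial.map_X]
    show Polynomial.C (glAct 𝔽 d g (X i)) +
        Polynomial.C (glAct 𝔽 d g ((X i : PolyR 𝔽 d) ^ Fintype.card 𝔽)) * Polynomial.X =
      (steenrodTotal 𝔽 d) (glAct 𝔽 d g (X i))
    rw [map_pow, show glAct 𝔽 d g (X i) =
        linForm 𝔽 d fun j => ((g⁻¹ : GL (Fin d) 𝔽) : Matrix (Fin d) (Fin d) 𝔽) i j from
      aeval_X _ i]
    rw [steenrodTotal_linForm]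
  exact congrFun (congrArg (fun φ => φ.toFun) key) r

/-- The Steenrod operations preserve the invariant ring. -/
lemma steenrodP_mem_invS (G : Subgroup (GL (Fin d) 𝔽)) (m : ℕ) (s : PolyR 𝔽 d)
    (hs : s ∈ invS 𝔽 d G) : steenrodP 𝔽 d m s ∈ invS 𝔽 d G := by
  rw [mem_invS] at hs ⊢
  intro g hg
  have h1 := map_glAct_steenrodTotal 𝔽 d g s
  rw [hs g hg] at h1
  have h2 : glAct 𝔽 d g (steenrodP 𝔽 d m s) =
      (Polynomial.map (glAct 𝔽 d g).toRingHom (steenrodTotal 𝔽 d s)).coeff m := by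
    rw [Polynomial.coeff_map]
    rfl
  rw [h2, h1]
  rfl

/-- The Steenrod operation `𝒫^m` restricted to the invariant ring `S = R^G`. -/
def steenrodPS (m : ℕ) (s : invS 𝔽 d G) : invS 𝔽 d G :=
  ⟨steenrodP 𝔽 d m (s : PolyR 𝔽 d), steenrodP_mem_invS 𝔽 d G m _ s.2⟩

/-!
A class in `H^i(G, R)` is represented by an inhomogeneous cocycle `z : G^i → R`, and
the operations `𝒫^k` act on cochains pointwise. Being additive and `G`-equivariant, they commute
with the coboundary, so they preserve cocycles and coboundaries. By the Cartan formula,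
`𝒫^m(s) z = 𝒫^m(s z) - ∑_{k < m} 𝒫^k(s) 𝒫^{m-k}(z)`. If `s ∈ J_i` then `s z` is a coboundary,
hence so is `𝒫^m(s z)`, and by strong induction on `m` every `𝒫^k(s)` with `k < m` lies in `J_i`
and so kills the cocycle `𝒫^{m-k}(z)` up to a coboundary.
-/

open CategoryTheory groupCohomology

theorem CategoryTheory.ShortComplex.mem_annihilator_homology_iff {R : Type*} [CommRing R]
    (S : ShortComplex (ModuleCat R)) (t : R) :
    t ∈ Module.annihilator R S.homology ↔
      ∀ z, S.g z = 0 → t • z ∈ LinearMap.range S.f.hom := by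
  rw [S.moduleCatHomologyIso.toLinearEquiv.annihilator_eq]
  change t ∈ Module.annihilator R (LinearMap.ker S.g.hom ⧸ LinearMap.range S.moduleCatToCycles) ↔ _
  rw [Submodule.annihilator_quotient, Submodule.mem_colon]
  simp only [Set.mem_univ, forall_const, Subtype.forall, LinearMap.mem_ker]
  exact forall₂_congr fun z _ => exists_congr fun b => Subtype.ext_iff

universe u in
theorem groupCohomology.inhomogeneousCochains.d_addMonoidHom_comp {k G : Type u} [CommRing k]
    [Group G] (A : Rep k G) (φ : A →+ A) (hφ : ∀ g x, φ (A.ρ g x) = A.ρ g (φ x)) (n n' : ℕ)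
    (f : (Fin n → G) → A) :
    ((inhomogeneousCochains A).d n n' (φ ∘ f) : (Fin n' → G) → A) =
      φ ∘ ((inhomogeneousCochains A).d n n' f : (Fin n' → G) → A) := by
  rcases eq_or_ne (n + 1) n' with rfl | h
  · rw [inhomogeneousCochains.d_def]
    funext g
    show A.ρ (g 0) (φ (f fun i => g i.succ)) + ∑ j : Fin (n + 1),
        (-1 : k) ^ ((j : ℕ) + 1) • φ (f (Fin.contractNth j (· * ·) g)) =
      φ (A.ρ (g 0) (f fun i => g i.succ) + ∑ j : Fin (n + 1),
        (-1 : k) ^ ((j : ℕ) + 1) • f (Fin.contractNth j (· * ·) g))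
    rw [map_add, map_sum, hφ]
    congr 1
    refine Finset.sum_congr rfl fun j _ => ?_
    rcases neg_one_pow_eq_or k (j + 1 : ℕ) with h | h <;> simp [h]
  · rw [(inhomogeneousCochains A).shape n n' h]
    exact funext fun _ => (map_zero φ).symm

def steenrodPAddHom (k : ℕ) : PolyR 𝔽 d →+ PolyR 𝔽 d :=
  AddMonoidHom.mk' (steenrodP 𝔽 d k) fun a b => by simp [steenrodP]

lemma steenrodP_zero (f : PolyR 𝔽 d) : steenrodP 𝔽 d 0 f = f := by
  unfold steenrodP
  induction f using MvPolynomial.induction_on with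
  | C a => simp [steenrodTotal, Polynomial.algebraMap_apply]
  | add p q hp hq => rw [map_add, Polynomial.coeff_add, hp, hq]
  | mul_X p i hp => rw [map_mul, Polynomial.mul_coeff_zero, hp]; simp [steenrodTotal]

lemma steenrodP_mul (m : ℕ) (a b : PolyR 𝔽 d) :
    steenrodP 𝔽 d m (a * b) =
      ∑ k ∈ Finset.range (m + 1), steenrodP 𝔽 d k a * steenrodP 𝔽 d (m - k) b := by
  rw [steenrodP, map_mul, Polynomial.coeff_mul, Finset.Nat.sum_antidiagonal_eq_sum_range_succ_mk]
  rfl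

lemma steenrodP_smul (m : ℕ) (s : invS 𝔽 d G) (f : PolyR 𝔽 d) :
    steenrodP 𝔽 d m (s • f) =
      ∑ k ∈ Finset.range (m + 1), steenrodPS 𝔽 d G k s • steenrodP 𝔽 d (m - k) f :=
  steenrodP_mul 𝔽 d m s f

lemma glAct_steenrodP (g : GL (Fin d) 𝔽) (k : ℕ) (f : PolyR 𝔽 d) :
    glAct 𝔽 d g (steenrodP 𝔽 d k f) = steenrodP 𝔽 d k (glAct 𝔽 d g f) := by
  rw [steenrodP, steenrodP, ← map_glAct_steenrodTotal, Polynomial.coeff_map]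
  rfl

abbrev cochainsR : CochainComplex (ModuleCat (invS 𝔽 d G)) ℕ :=
  inhomogeneousCochains (Rep.of (invRep 𝔽 d G))

lemma mem_annJ_iff (i : ℕ) (t : invS 𝔽 d G) :
    t ∈ annJ 𝔽 d G i ↔ ∀ z, (cochainsR 𝔽 d G).d i ((ComplexShape.up ℕ).next i) z = 0 →
      t • z ∈ LinearMap.range ((cochainsR 𝔽 d G).d ((ComplexShape.up ℕ).prev i) i).hom :=
  ((cochainsR 𝔽 d G).sc i).mem_annihilator_homology_iff t

lemma cochainsR_d_steenrodP_comp (k n n' : ℕ) (f : (Fin n → G) → PolyR 𝔽 d) :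
    ((cochainsR 𝔽 d G).d n n' (steenrodP 𝔽 d k ∘ f) : (Fin n' → G) → PolyR 𝔽 d) =
      steenrodP 𝔽 d k ∘ ((cochainsR 𝔽 d G).d n n' f : (Fin n' → G) → PolyR 𝔽 d) :=
  inhomogeneousCochains.d_addMonoidHom_comp (Rep.of (invRep 𝔽 d G)) (steenrodPAddHom 𝔽 d k)
    (fun g f => (glAct_steenrodP 𝔽 d g k f).symm) n n' f

/-- **Proposition.** For every `i ≥ 0`, `J_i = ann_S H^i(G, R)` is a `𝒫^*`-invariant ideal
of `S`: `𝒫^m(J_i) ⊆ J_i` for all `m ≥ 0`. -/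
theorem annJ_steenrod_invariant (i m : ℕ) (s : invS 𝔽 d G) (hs : s ∈ annJ 𝔽 d G i) :
    steenrodPS 𝔽 d G m s ∈ annJ 𝔽 d G i := by
  induction m using Nat.strong_induction_on with
  | _ m ih =>
  rw [mem_annJ_iff] at hs ⊢
  intro z hz
  obtain ⟨b, hb⟩ := hs z hz
  have hcocycle (k : ℕ) :
      (cochainsR 𝔽 d G).d i ((ComplexShape.up ℕ).next i) (steenrodP 𝔽 d k ∘ z) = 0 := by
    rw [cochainsR_d_steenrodP_comp, hz]
    exact funext fun _ => map_zero (steenrodPAddHom 𝔽 d k)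
  have hcartan : steenrodPS 𝔽 d G m s • z = steenrodP 𝔽 d m ∘ (s • z) -
      ∑ k ∈ Finset.range m, steenrodPS 𝔽 d G k s • (steenrodP 𝔽 d (m - k) ∘ z) := by
    funext g
    simp [steenrodP_smul, Finset.sum_range_succ, steenrodP_zero]
  rw [hcartan]
  refine sub_mem ⟨steenrodP 𝔽 d m ∘ b, by rw [cochainsR_d_steenrodP_comp, hb]⟩
    (Submodule.sum_mem _ fun k hk => ?_)
  exact (mem_annJ_iff 𝔽 d G i _).1 (ih k (Finset.mem_range.1 hk)) _ (hcocycle _)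

end
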